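/- Lemma (completion of a weak co-RC-system): Let (Q, •) be a left-non-degenerate weak co-RC-system in which x • y is defined whenever t(x) = t(y). Let (Q̂, •̂) be its completion: adjoin to Q one new loop ε_λ at each vertex λ and set, for x, y ∈ Q, x •̂ y := x • y if x ≠ y, x •̂ x := ε_{s(x)}, x •̂ ε_{t(x)} := ε_{s(x)}, ε_{t(x)} •̂ x := x, and ε_λ •̂ ε_λ := ε_λ. Then (Q̂, •̂) is a weak co-RC-system: t(x •̂ y) = s(x), s(x •̂ y) = s(y •̂ x), and the co-RC-law (x •̂ y) •̂ (x •̂ z) = (y •̂ x) •̂ (y •̂ z) holds for all x, y, z ∈ Q̂ with a common target. -/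
import Mathlib


/-!
Lemma (completion of a weak co-RC-system): the completion `(Q̂, •̂)` of a
left-non-degenerate weak co-RC-system `(Q, •)` (with `•` defined on all
same-target pairs) is a weak co-RC-system.

The quiver `Q` is modelled as a type `A` of arrows with source and target maps
`s, t : A → Λ`; the completion has arrows `A ⊕ Λ`, where `Sum.inr λ` is the
inserted loop `ε_λ` at the vertex `λ`.
-/

/-- Source map of the completion. -/
def hatS {Λ A : Type*} (s : A → Λ) : A ⊕ Λ → Λ
  | Sum.inl x => s x
  | Sum.inr l => l

/-- Target map of the completion. -/
def hatT {Λ A : Type*} (t : A → Λ) : A ⊕ Λ → Λ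
  | Sum.inl x => t x
  | Sum.inr l => l

/-- The operation `•̂` of the completion. -/
def hatBul {Λ A : Type*} [DecidableEq A] (s : A → Λ) (bul : A → A → A) :
    A ⊕ Λ → A ⊕ Λ → A ⊕ Λ
  | Sum.inl x, Sum.inl y => if x = y then Sum.inr (s x) else Sum.inl (bul x y)
  | Sum.inl x, Sum.inr _ => Sum.inr (s x)
  | Sum.inr _, Sum.inl y => Sum.inl y
  | Sum.inr l, Sum.inr _ => Sum.inr l

section Aux
variable {Λ A : Type*} [DecidableEq A] (s : A → Λ) (bul : A → A → A)

lemma hatBul_ne {x y : A} (h : x ≠ y) :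
    hatBul s bul (Sum.inl x) (Sum.inl y) = Sum.inl (bul x y) := by
  simp [hatBul, h]

lemma hatBul_eq (x : A) :
    hatBul s bul (Sum.inl x) (Sum.inl x) = Sum.inr (s x) := by
  simp [hatBul]

lemma hatBul_lr (x : A) (m : Λ) :
    hatBul s bul (Sum.inl x) (Sum.inr m) = Sum.inr (s x) := rfl

lemma hatBul_rl (l : Λ) (y : A) :
    hatBul s bul (Sum.inr l) (Sum.inl y) = Sum.inl y := rfl

lemma hatBul_rr (l m : Λ) :
    hatBul s bul (Sum.inr l) (Sum.inr m) = Sum.inr l := rfl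

end Aux

theorem completion_is_weak_coRC_system
    {Λ A : Type*} [DecidableEq A] (s t : A → Λ) (bul : A → A → A)
    -- `(Q, •)` is a weak co-RC-system, with `x • y` defined whenever `t x = t y`
    (hts : ∀ x y, t x = t y → t (bul x y) = s x)
    (hsb : ∀ x y, t x = t y → s (bul x y) = s (bul y x))
    (corc : ∀ x y z, t x = t y → t x = t z →
      bul (bul x y) (bul x z) = bul (bul y x) (bul y z))
    -- left-non-degeneracy
    (lnd : ∀ x : A, Function.Bijective fun y : {y : A // t y = t x} =>
      (⟨bul x y.1, hts x y.1 y.2.symm⟩ : {z : A // t z = s x})) :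
    -- sources and targets in the completion
    (∀ x y : A ⊕ Λ, hatT t x = hatT t y →
      hatT t (hatBul s bul x y) = hatS s x ∧
      hatS s (hatBul s bul x y) = hatS s (hatBul s bul y x)) ∧
    -- the co-RC-law holds in the completion
    (∀ x y z : A ⊕ Λ, hatT t x = hatT t y → hatT t x = hatT t z →
      hatBul s bul (hatBul s bul x y) (hatBul s bul x z) =
        hatBul s bul (hatBul s bul y x) (hatBul s bul y z)) := by
  have inj : ∀ x y z : A, t y = t x → t z = t x → bul x y = bul x z → y = z := by
    intro x y z hy hz h
    have := (lnd x).1 (a₁ := ⟨y, hy⟩) (a₂ := ⟨z, hz⟩) (Subtype.ext h)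
    exact congrArg Subtype.val this
  constructor
  · rintro (x | l) (y | m) h <;> simp only [hatT, hatS] at *
    · by_cases h1 : x = y
      · subst h1; rw [hatBul_eq]; exact ⟨rfl, rfl⟩
      · rw [hatBul_ne s bul h1, hatBul_ne s bul (Ne.symm h1)]
        exact ⟨hts x y h, hsb x y h⟩
    · rw [hatBul_lr, hatBul_rl]; exact ⟨rfl, rfl⟩
    · rw [hatBul_rl, hatBul_lr]; exact ⟨h.symm, rfl⟩
    · rw [hatBul_rr, hatBul_rr]; exact ⟨rfl, h⟩
  · rintro (x | l) (y | m) (z | n) hxy hxz <;>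
      simp only [hatT] at hxy hxz
    · -- all in A
      by_cases h1 : x = y
      · subst h1; rfl
      by_cases h2 : x = z
      · subst h2
        rw [hatBul_ne s bul h1, hatBul_eq, hatBul_lr,
          hatBul_ne s bul (Ne.symm h1), hatBul_eq, hsb x y hxy]
      by_cases h3 : y = z
      · subst h3
        rw [hatBul_ne s bul h1, hatBul_eq, hatBul_eq,
          hatBul_ne s bul (Ne.symm h1), hatBul_lr, hsb x y hxy]
      · have hne1 : bul x y ≠ bul x z := fun h => h3 (inj x y z hxy.symm hxz.symm h)
        have hne2 : bul y x ≠ bul y z := fun h =>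
          h2 (inj y x z hxy (hxy ▸ hxz).symm h)
        rw [hatBul_ne s bul h1, hatBul_ne s bul h2, hatBul_ne s bul h3,
          hatBul_ne s bul (Ne.symm h1), hatBul_ne s bul hne1, hatBul_ne s bul hne2,
          corc x y z hxy hxz]
    · -- x y in A, z = ε
      by_cases h1 : x = y
      · subst h1; simp [hatBul_eq, hatBul_lr, hatBul_rr, hatBul_rl]
      · rw [hatBul_ne s bul h1, hatBul_lr, hatBul_ne s bul (Ne.symm h1),
          hatBul_lr, hatBul_lr, hatBul_lr, hsb x y hxy]
    · -- x z in A, y = ε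
      by_cases h2 : x = z
      · subst h2; simp [hatBul_lr, hatBul_eq, hatBul_rr, hatBul_rl]
      · simp [hatBul_lr, hatBul_rl, hatBul_ne s bul h2]
    · -- x in A, y z = ε
      rw [hatBul_lr, hatBul_lr, hatBul_rr, hatBul_rl, hatBul_rr, hatBul_lr]
    · -- y z in A, x = ε
      by_cases h3 : y = z
      · subst h3; simp [hatBul_rl, hatBul_eq, hatBul_lr, hatBul_rr]
      · simp [hatBul_rl, hatBul_ne s bul h3, hatBul_lr]
    · simp [hatBul_rl, hatBul_rr, hatBul_lr]
    · simp [hatBul_rr, hatBul_rl, hatBul_lr]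
    · subst hxy; rfl
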